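/- arXiv:1705.08937 — 7 statements merged into one kernel-verified Lean document; each statement's English description precedes it below -/
import Mathlib

section
/- Let A be a unital ring and let P, Q ∈ A be idempotents (P² = P and Q² = Q). Then B = 1 − P − Q is a unit of A if and only if 1 − (P − Q)² is a unit of A. -/
lemma aux_sq_unit {A : Type*} [Ring A] {a : A} (h : IsUnit (a ^ 2)) : IsUnit a := by
  obtain ⟨u, hu⟩ := h
  have hc : Commute a ↑u := by rw [hu]; exact (Commute.refl a).pow_right 2
  have hc' : Commute a ↑u⁻¹ := hc.units_inv_right
  refine ⟨⟨a, a * ↑u⁻¹, ?_, ?_⟩, rfl⟩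
  · rw [← mul_assoc, ← sq, ← hu, u.mul_inv]
  · rw [mul_assoc, ← hc'.eq, ← mul_assoc, ← sq, ← hu, u.mul_inv]

/-- For idempotents `P, Q` in a unital ring, `1 - P - Q` is a unit iff `1 - (P - Q)²` is. -/
theorem stmt_3 {A : Type*} [Ring A] (P Q : A) (hP : P ^ 2 = P) (hQ : Q ^ 2 = Q) :
    IsUnit (1 - P - Q) ↔ IsUnit (1 - (P - Q) ^ 2) := by
  have key : (1 - P - Q) ^ 2 = 1 - (P - Q) ^ 2 := by
    rw [← sub_eq_zero]
    have h : (1 - P - Q) ^ 2 - (1 - (P - Q) ^ 2) = 2 * (P ^ 2 - P) + 2 * (Q ^ 2 - Q) := by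
      noncomm_ring
    rw [h, hP, hQ]; simp
  constructor
  · intro h; rw [← key]; exact h.pow 2
  · intro h; rw [← key] at h; exact aux_sq_unit h
end

section
/- Let A be a complex unital Banach algebra and let P, Q ∈ A be idempotents (P² = P, Q² = Q). Then the following are equivalent: (i) there exists an element V lying in the smallest closed subalgebra of A containing 1, P, Q, such that V is invertible in A and V P V⁻¹ = Q; (ii) 1 − P − Q is invertible in A; (iii) 1 does not belong to the spectrum of (P − Q)²; (iv) both P + 2Q − 1 and P + 2Q − 2 are invertible in A. Moreover, if (ii) holds and B = 1 − P − Q, then B P B⁻¹ = Q and B Q B⁻¹ = P. -/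
/-!
Write `B = 1 - P - Q` and `C = (P - Q) ^ 2`. For idempotents, `B * P = Q * B`, `B * Q = P * B`,
`B ^ 2 = 1 - C` and `(P + 2Q - 1)(P + 2Q - 2) = 2 B ^ 2`, which gives everything except
(i) ⇒ (ii).

For (i) ⇒ (ii), `C` commutes with `P` and `Q`, so it is central in the closed algebra `𝔅` of all
elements commuting with `C`; `𝔅` contains `V` and `V⁻¹`. If `B` is not invertible then neither
is `1 - C`, and the closure `J` of the ideal `𝔅 (1 - C)` is a proper closed two-sided ideal
(units are open). In `𝔅 / J` the images satisfy `(p - q) ^ 2 = 1`, hence `pqp = qpq = 0`, so the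
algebra generated by `p, q` is the span of `p, q, pq, qp`; as this span is finite-dimensional and
`J` is closed, the image of `V` still lies in it. There an invertible `v` with `v p = q v` would
square to zero.
-/

namespace IsIdempotentElem

variable {R : Type*} [Ring R] {p q : R}

theorem sub_sq (hp : IsIdempotentElem p) (hq : IsIdempotentElem q) :
    (p - q) ^ 2 = p + q - p * q - q * p := by
  rw [sq, sub_mul, mul_sub, mul_sub, hp.eq, hq.eq]
  abel

theorem mul_sub_sq (hp : IsIdempotentElem p) (hq : IsIdempotentElem q) :
    p * (p - q) ^ 2 = p - p * q * p := by
  rw [hp.sub_sq hq]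
  simp only [mul_add, mul_sub, ← mul_assoc, hp.eq]
  abel

theorem sub_sq_mul (hp : IsIdempotentElem p) (hq : IsIdempotentElem q) :
    (p - q) ^ 2 * p = p - p * q * p := by
  rw [hp.sub_sq hq]
  simp only [add_mul, sub_mul, mul_assoc, hp.eq]
  abel

theorem commute_sub_sq (hp : IsIdempotentElem p) (hq : IsIdempotentElem q) :
    Commute p ((p - q) ^ 2) :=
  (hp.mul_sub_sq hq).trans (hp.sub_sq_mul hq).symm

theorem mul_mul_eq_zero_of_sub_sq_eq_one (hp : IsIdempotentElem p) (hq : IsIdempotentElem q)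
    (h : (p - q) ^ 2 = 1) : p * q * p = 0 := by
  have h' := hp.mul_sub_sq hq
  rw [h, mul_one] at h'
  exact sub_eq_self.mp h'.symm

theorem one_sub_sub_sq (hp : IsIdempotentElem p) (hq : IsIdempotentElem q) :
    (1 - p - q) ^ 2 = 1 - (p - q) ^ 2 := by
  rw [hp.sub_sq hq, sq]
  simp only [sub_mul, mul_sub, one_mul, mul_one, hp.eq, hq.eq]
  abel

theorem one_sub_sub_mul (hp : IsIdempotentElem p) (hq : IsIdempotentElem q) :
    (1 - p - q) * p = q * (1 - p - q) := by
  simp only [sub_mul, mul_sub, one_mul, mul_one, hp.eq, hq.eq]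
  abel

theorem add_two_mul_sub_one_mul_add_two_mul_sub_two (hp : IsIdempotentElem p)
    (hq : IsIdempotentElem q) : (p + 2 * q - 1) * (p + 2 * q - 2) = 2 * (1 - p - q) ^ 2 := by
  rw [← sub_eq_zero, show (p + 2 * q - 1) * (p + 2 * q - 2) - 2 * (1 - p - q) ^ 2 =
    2 * (q * q - q) - (p * p - p) by noncomm_ring, hp.eq, hq.eq, sub_self, sub_self, mul_zero,
    sub_zero]

end IsIdempotentElem

section TwoIdempotents

open Submodule
open scoped Pointwise

variable {𝕜 R : Type*} [CommRing 𝕜] [Ring R] [Algebra 𝕜 R] {p q : R}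

theorem IsIdempotentElem.adjoin_eq_span (hp : IsIdempotentElem p) (hq : IsIdempotentElem q)
    (h : (p - q) ^ 2 = 1) :
    Subalgebra.toSubmodule (Algebra.adjoin 𝕜 {p, q}) = span 𝕜 {p, q, p * q, q * p} := by
  have hpqp := hp.mul_mul_eq_zero_of_sub_sq_eq_one hq h
  have hqpq := hq.mul_mul_eq_zero_of_sub_sq_eq_one hp (by rwa [← neg_sub, neg_sq])
  have hpp : ∀ x, x * p * p = x * p := fun x => by rw [mul_assoc, hp.eq]
  have hqq : ∀ x, x * q * q = x * q := fun x => by rw [mul_assoc, hq.eq]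
  set S := span 𝕜 {p, q, p * q, q * p}
  have hone : 1 ∈ S := by
    rw [← h, hp.sub_sq hq]
    exact sub_mem (sub_mem (add_mem (subset_span (by simp)) (subset_span (by simp)))
      (subset_span (by simp))) (subset_span (by simp))
  have hmul : ∀ x y, x ∈ S → y ∈ S → x * y ∈ S := by
    have hgen : ({p, q, p * q, q * p} : Set R) * {p, q, p * q, q * p} ⊆ S := by
      rw [Set.mul_subset_iff]
      rintro x (rfl | rfl | rfl | rfl) y (rfl | rfl | rfl | rfl) <;>
        (try simp only [← mul_assoc, hp.eq, hq.eq, hpp, hqq, hpqp, hqpq, zero_mul]) <;>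
        first | exact zero_mem S | exact subset_span (by simp)
    intro x y hx hy
    have hxy : x * y ∈ S * S := mul_mem_mul hx hy
    rw [span_mul_span] at hxy
    exact span_le.mpr hgen hxy
  apply le_antisymm
  · exact Algebra.adjoin_le (S := S.toSubalgebra hone hmul)
      (Set.pair_subset (subset_span (by simp)) (subset_span (by simp)))
  · have hp' : p ∈ Algebra.adjoin 𝕜 {p, q} := Algebra.subset_adjoin (by simp)
    have hq' : q ∈ Algebra.adjoin 𝕜 {p, q} := Algebra.subset_adjoin (by simp)
    refine span_le.mpr ?_
    rintro x (rfl | rfl | rfl | rfl)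
    exacts [hp', hq', Subalgebra.mul_mem _ hp' hq', Subalgebra.mul_mem _ hq' hp']

/-- Sandwiching `v * p = q * v` between two `p`'s, resp. two `q`'s, kills the coefficients of `p`
and `q` in `v`; what is left lies in the span of `p * q` and `q * p`, whose products vanish. -/
theorem IsIdempotentElem.mul_self_eq_zero_of_mem_span (hp : IsIdempotentElem p)
    (hq : IsIdempotentElem q) (hpqp : p * q * p = 0) (hqpq : q * p * q = 0) {v : R}
    (hv : v ∈ span 𝕜 {p, q, p * q, q * p}) (hvp : v * p = q * v) : v * v = 0 := by
  have hpp : ∀ x, x * p * p = x * p := fun x => by rw [mul_assoc, hp.eq]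
  have hqq : ∀ x, x * q * q = x * q := fun x => by rw [mul_assoc, hq.eq]
  simp only [mem_span_insert, mem_span_singleton] at hv
  obtain ⟨a, _, ⟨b, _, ⟨c, _, ⟨d, rfl⟩, rfl⟩, rfl⟩, rfl⟩ := hv
  have hap : a • p = 0 := by
    simpa only [mul_add, add_mul, mul_smul_comm, smul_mul_assoc, ← mul_assoc, hp.eq, hq.eq,
      hpp, hqq, hpqp, hqpq, zero_mul, mul_zero, smul_zero, add_zero, zero_add]
      using congrArg (p * · * p) hvp
  have hbq : b • q = 0 := by
    simpa only [mul_add, add_mul, mul_smul_comm, smul_mul_assoc, ← mul_assoc, hq.eq, hpp, hqq,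
      hpqp, hqpq, zero_mul, mul_zero, smul_zero, add_zero, zero_add]
      using (congrArg (q * · * q) hvp).symm
  rw [hap, hbq, zero_add, zero_add]
  simp only [mul_add, add_mul, mul_smul_comm, smul_mul_assoc, ← mul_assoc, hpp, hqq, hpqp, hqpq,
    zero_mul, smul_zero, add_zero]

end TwoIdempotents

section ClosedIdeal

instance Ideal.closure.isTwoSided {R : Type*} [TopologicalSpace R] [Ring R] [IsTopologicalRing R]
    (I : Ideal R) [I.IsTwoSided] : I.closure.IsTwoSided :=
  ⟨fun b ha => map_mem_closure (f := (· * b)) (continuous_mul_const b) ha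
    fun _ hx => I.mul_mem_right b hx⟩

variable {R : Type*} [Ring R] {d : R}

theorem Ideal.isTwoSided_span_singleton_of_mem_center (hd : d ∈ Set.center R) :
    (Ideal.span {d}).IsTwoSided :=
  ⟨fun b ha => by
    obtain ⟨a, rfl⟩ := Ideal.mem_span_singleton'.mp ha
    exact Ideal.mem_span_singleton'.mpr
      ⟨a * b, by rw [mul_assoc, Semigroup.mem_center_iff.mp hd b, ← mul_assoc]⟩⟩

theorem Ideal.span_singleton_ne_top_of_mem_center (hd : d ∈ Set.center R) (hu : ¬IsUnit d) :
    Ideal.span {d} ≠ ⊤ := by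
  rw [Ne, Ideal.eq_top_iff_one, Ideal.mem_span_singleton']
  rintro ⟨a, ha⟩
  exact hu ⟨⟨d, a, by rw [← Semigroup.mem_center_iff.mp hd a, ha], ha⟩, rfl⟩

end ClosedIdeal

section Banach

variable {𝕜 𝔅 : Type*} [NontriviallyNormedField 𝕜] [CompleteSpace 𝕜] [NormedRing 𝔅]
  [NormedAlgebra 𝕜 𝔅]

theorem Ideal.Quotient.isClosed_mkₐ_preimage_span_image {J : Ideal 𝔅} [J.IsTwoSided]
    (hJ : IsClosed (J : Set 𝔅)) {s : Set 𝔅} (hs : s.Finite) :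
    IsClosed (mkₐ 𝕜 J ⁻¹' Submodule.span 𝕜 (mkₐ 𝕜 J '' s)) := by
  have hker : LinearMap.ker (mkₐ 𝕜 J).toLinearMap = J.restrictScalars 𝕜 := by
    ext x
    simp [Ideal.Quotient.eq_zero_iff_mem]
  have := FiniteDimensional.span_of_finite 𝕜 hs
  have h := Submodule.isClosed_sup_finiteDimensional (J.restrictScalars 𝕜) (.span 𝕜 s) hJ
  rwa [sup_comm, ← hker, ← Submodule.comap_map_eq, Submodule.map_span] at h

theorem Ideal.Quotient.mkₐ_mem_span_of_mem_topologicalClosure_adjoin {J : Ideal 𝔅}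
    [J.IsTwoSided] (hJ : IsClosed (J : Set 𝔅)) {p q v : 𝔅} (hp : IsIdempotentElem p)
    (hq : IsIdempotentElem q) (h : (mkₐ 𝕜 J p - mkₐ 𝕜 J q) ^ 2 = 1)
    (hv : v ∈ (Algebra.adjoin 𝕜 {p, q}).topologicalClosure) :
    mkₐ 𝕜 J v ∈ Submodule.span 𝕜
      {mkₐ 𝕜 J p, mkₐ 𝕜 J q, mkₐ 𝕜 J p * mkₐ 𝕜 J q, mkₐ 𝕜 J q * mkₐ 𝕜 J p} := by
  set φ := mkₐ 𝕜 J
  have hspan := (hp.map φ).adjoin_eq_span (𝕜 := 𝕜) (hq.map φ) h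
  set T := (Algebra.adjoin 𝕜 {φ p, φ q}).comap φ
  have hT : (T : Set 𝔅) = φ ⁻¹' Submodule.span 𝕜 (φ '' {p, q, p * q, q * p}) := by
    ext x
    rw [Set.mem_preimage, SetLike.mem_coe, Subalgebra.mem_comap, ← Subalgebra.mem_toSubmodule,
      hspan]
    simp [Set.image_insert_eq]
  have hle : Algebra.adjoin 𝕜 {p, q} ≤ T :=
    Algebra.adjoin_le (Set.pair_subset (Algebra.subset_adjoin (Set.mem_insert _ _))
      (Algebra.subset_adjoin (Set.mem_insert_of_mem _ rfl)))
  have hvT : v ∈ T := Subalgebra.topologicalClosure_minimal hle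
    (hT ▸ isClosed_mkₐ_preimage_span_image hJ (Set.toFinite _)) hv
  rw [← hspan]
  exact hvT

theorem IsIdempotentElem.isUnit_one_sub_sub_of_intertwiner_of_mem_center [CompleteSpace 𝔅]
    {p q v : 𝔅} (hp : IsIdempotentElem p) (hq : IsIdempotentElem q)
    (hc : (p - q) ^ 2 ∈ Set.center 𝔅) (hv : IsUnit v) (hvp : v * p = q * v)
    (hvmem : v ∈ (Algebra.adjoin 𝕜 {p, q}).topologicalClosure) : IsUnit (1 - p - q) := by
  by_contra hpq
  have hdu : ¬IsUnit (1 - (p - q) ^ 2) := by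
    rwa [← hp.one_sub_sub_sq hq, isUnit_pow_iff two_ne_zero]
  set d := 1 - (p - q) ^ 2
  have hd : d ∈ Set.center 𝔅 := Semigroup.mem_center_iff.mpr fun g => by
    rw [mul_sub, sub_mul, mul_one, one_mul, Semigroup.mem_center_iff.mp hc g]
  have := Ideal.isTwoSided_span_singleton_of_mem_center hd
  set J := (Ideal.span {d}).closure
  have : Nontrivial (𝔅 ⧸ J) := Ideal.Quotient.nontrivial_iff.mpr
    (Ideal.closure_ne_top _ (Ideal.span_singleton_ne_top_of_mem_center hd hdu))
  set φ := Ideal.Quotient.mkₐ 𝕜 J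
  have h1 : (φ p - φ q) ^ 2 = 1 := by
    have hφd : φ d = 0 :=
      Ideal.Quotient.eq_zero_iff_mem.mpr (subset_closure (Ideal.mem_span_singleton_self d))
    rwa [map_sub, map_one, map_pow, map_sub, sub_eq_zero, eq_comm] at hφd
  have hvv : φ v * φ v = 0 := (hp.map φ).mul_self_eq_zero_of_mem_span (hq.map φ)
    ((hp.map φ).mul_mul_eq_zero_of_sub_sq_eq_one (hq.map φ) h1)
    ((hq.map φ).mul_mul_eq_zero_of_sub_sq_eq_one (hp.map φ) (by rwa [← neg_sub, neg_sq]))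
    (Ideal.Quotient.mkₐ_mem_span_of_mem_topologicalClosure_adjoin isClosed_closure hp hq h1 hvmem)
    (by rw [← map_mul, ← map_mul, hvp])
  exact not_isUnit_zero ((hv.map φ).mul_left_eq_zero.mp hvv ▸ hv.map φ)

theorem IsIdempotentElem.isUnit_one_sub_sub_of_intertwiner {A : Type*} [NormedRing A]
    [NormedAlgebra 𝕜 A] [CompleteSpace A] {P Q V : A} (hP : IsIdempotentElem P)
    (hQ : IsIdempotentElem Q) (hV : IsUnit V) (hVP : V * P = Q * V)
    (hVmem : V ∈ (Algebra.adjoin 𝕜 {P, Q}).topologicalClosure) : IsUnit (1 - P - Q) := by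
  set 𝔅 := Subalgebra.centralizer 𝕜 {(P - Q) ^ 2}
  have hclosed : IsClosed (𝔅 : Set A) := by
    rw [Subalgebra.coe_centralizer]
    exact Set.isClosed_centralizer _
  have : CompleteSpace 𝔅 := hclosed.completeSpace_coe
  have hemb : Topology.IsClosedEmbedding ((↑) : 𝔅 → A) := hclosed.isClosedEmbedding_subtypeVal
  have hmem : ∀ x, Commute x ((P - Q) ^ 2) → x ∈ 𝔅 := fun x hx =>
    (Subalgebra.mem_centralizer_iff 𝕜).mpr (by rintro _ rfl; exact hx.eq.symm)
  let P' : 𝔅 := ⟨P, hmem P (hP.commute_sub_sq hQ)⟩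
  let Q' : 𝔅 := ⟨Q, hmem Q (by rw [← neg_sub, neg_sq]; exact hQ.commute_sub_sq hP)⟩
  have hadj : (Algebra.adjoin 𝕜 {P, Q} : Set A) = (↑) '' (Algebra.adjoin 𝕜 {P', Q'} : Set 𝔅) := by
    simpa [Set.image_pair] using (congrArg SetLike.coe (AlgHom.map_adjoin 𝔅.val {P', Q'})).symm
  rw [← SetLike.mem_coe, Subalgebra.topologicalClosure_coe, hadj, hemb.closure_image_eq] at hVmem
  obtain ⟨v, hv, rfl⟩ := hVmem
  have hvunit : IsUnit v := by
    have hinv : Commute ↑hV.unit⁻¹ ((P - Q) ^ 2) :=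
      Commute.units_inv_left ((Subalgebra.mem_centralizer_iff 𝕜).mp v.2 _ rfl).symm
    exact ⟨⟨v, ⟨_, hmem _ hinv⟩, Subtype.ext hV.mul_val_inv, Subtype.ext hV.val_inv_mul⟩, rfl⟩
  have hc : (P' - Q') ^ 2 ∈ Set.center 𝔅 := Semigroup.mem_center_iff.mpr fun g =>
    Subtype.ext ((Subalgebra.mem_centralizer_iff 𝕜).mp g.2 _ rfl).symm
  have h𝔅 := IsIdempotentElem.isUnit_one_sub_sub_of_intertwiner_of_mem_center (p := P') (q := Q')
    (Subtype.ext hP) (Subtype.ext hQ) hc hvunit (Subtype.ext hVP) hv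
  exact h𝔅.map 𝔅.val

end Banach

/-- Equivalent conditions for the existence of an intertwining invertible element in the
smallest closed subalgebra generated by `1, P, Q` (for idempotents `P, Q` in a complex
unital Banach algebra), and the corresponding conjugation identities for `B = 1 - P - Q`. -/
theorem stmt_8 {A : Type*} [NormedRing A] [NormedAlgebra ℂ A] [CompleteSpace A]
    (P Q : A) (hP : P ^ 2 = P) (hQ : Q ^ 2 = Q) :
    ((∃ V : Aˣ, (V : A) ∈ (Algebra.adjoin ℂ ({P, Q} : Set A)).topologicalClosure ∧
        (V : A) * P * (↑V⁻¹ : A) = Q) ↔ IsUnit (1 - P - Q)) ∧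
    (IsUnit (1 - P - Q) ↔ (1 : ℂ) ∉ spectrum ℂ ((P - Q) ^ 2)) ∧
    (IsUnit (1 - P - Q) ↔ (IsUnit (P + 2 * Q - 1) ∧ IsUnit (P + 2 * Q - 2))) ∧
    (∀ B : Aˣ, (B : A) = 1 - P - Q →
      (B : A) * P * (↑B⁻¹ : A) = Q ∧ (B : A) * Q * (↑B⁻¹ : A) = P) := by
  have hP' : IsIdempotentElem P := (sq P).symm.trans hP
  have hQ' : IsIdempotentElem Q := (sq Q).symm.trans hQ
  have hBP : (1 - P - Q) * P = Q * (1 - P - Q) := hP'.one_sub_sub_mul hQ'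
  have hBQ : (1 - P - Q) * Q = P * (1 - P - Q) := by
    simpa only [sub_right_comm] using hQ'.one_sub_sub_mul hP'
  have h2 : IsUnit (2 : A) := by
    simpa only [map_ofNat] using (IsUnit.mk0 (2 : ℂ) two_ne_zero).map (algebraMap ℂ A)
  refine ⟨⟨?_, fun hB => ?_⟩, ?_, ?_, fun B hB => ?_⟩
  · rintro ⟨V, hVmem, hVP⟩
    exact hP'.isUnit_one_sub_sub_of_intertwiner hQ' V.isUnit
      ((Units.mul_inv_eq_iff_eq_mul V).mp hVP) hVmem
  · have hBmem : 1 - P - Q ∈ Algebra.adjoin ℂ ({P, Q} : Set A) :=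
      sub_mem (sub_mem (one_mem _) (Algebra.subset_adjoin (by simp)))
        (Algebra.subset_adjoin (by simp))
    exact ⟨hB.unit, Subalgebra.le_topologicalClosure _ hBmem,
      (Units.mul_inv_eq_iff_eq_mul _).mpr hBP⟩
  · rw [spectrum.notMem_iff, map_one, ← hP'.one_sub_sub_sq hQ', isUnit_pow_iff two_ne_zero]
  · have hcomm : Commute (P + 2 * Q - 1) (P + 2 * Q - 2) :=
      ((Commute.refl _).sub_right (Commute.ofNat_right _ 2)).sub_left (Commute.one_left _)
    rw [← hcomm.isUnit_mul_iff, hP'.add_two_mul_sub_one_mul_add_two_mul_sub_two hQ',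
      h2.mul_left_iff, isUnit_pow_iff two_ne_zero]
  · exact ⟨(Units.mul_inv_eq_iff_eq_mul B).mpr (by rw [hB, hBP]),
      (Units.mul_inv_eq_iff_eq_mul B).mpr (by rw [hB, hBQ])⟩
end

section
/- Let H be a complex Hilbert space and let P, Q be bounded idempotent operators on H (P² = P, Q² = Q). Then there exists a bounded invertible operator V on H (with bounded inverse) such that V P = Q V if and only if there exist a linear isometric equivalence from the range of P onto the range of Q and a linear isometric equivalence from the kernel of P onto the kernel of Q. -/
/-!
An invertible `V` with `V P = Q V` maps `range P` onto `range Q` and `ker P` onto `ker Q`.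
Conversely, `range P` and `ker P` are topological complements, so isomorphisms between the ranges
and between the kernels glue to an invertible `V` intertwining `P` and `Q`. Hence `P` and `Q` are
similar iff their ranges and their kernels are isomorphic as topological vector spaces. Between
Hilbert spaces such an isomorphism `T` can be replaced by the unitary part of its polar
decomposition, `T (T* T)^(-1/2)`.
-/

open ContinuousLinearMap

section Similarity

variable {R M : Type*} [Ring R] [TopologicalSpace M] [AddCommGroup M] [Module R M]

theorem ContinuousLinearMap.semiconjBy_of_mapsTo_range_ker {P Q V : M →L[R] M}
    (hP : IsIdempotentElem P) (hQ : IsIdempotentElem Q)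
    (hrange : ∀ x ∈ P.range, V x ∈ Q.range) (hker : ∀ x ∈ P.ker, V x ∈ Q.ker) :
    SemiconjBy V P Q := by
  ext x
  have hfix : Q (V (P x)) = V (P x) :=
    (LinearMap.IsIdempotentElem.mem_range_iff hQ.toLinearMap).mp
      (hrange _ (LinearMap.mem_range_self _ x))
  have hkill : Q (V (x - P x)) = 0 := hker _ <| by
    change P (x - P x) = 0
    rw [map_sub, sub_eq_zero]
    exact (DFunLike.congr_fun hP.eq x).symm
  rw [map_sub, map_sub, hfix, sub_eq_zero] at hkill
  simp [hkill]

theorem ContinuousLinearEquiv.map_range_eq_of_semiconjBy (V : M ≃L[R] M) {P Q : M →L[R] M}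
    (h : SemiconjBy (V : M →L[R] M) P Q) : P.range.map (V : M →ₗ[R] M) = Q.range := by
  rw [← LinearMap.range_comp]
  change (((V : M →L[R] M) * P : M →L[R] M) : M →ₗ[R] M).range = _
  rw [h.eq]
  exact LinearMap.range_comp_of_range_eq_top _ (LinearMap.range_eq_top.mpr V.surjective)

theorem ContinuousLinearEquiv.map_ker_eq_of_semiconjBy (V : M ≃L[R] M) {P Q : M →L[R] M}
    (h : SemiconjBy (V : M →L[R] M) P Q) : P.ker.map (V : M →ₗ[R] M) = Q.ker := by
  have hcomap : P.ker = Q.ker.comap (V : M →ₗ[R] M) := by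
    rw [← LinearMap.ker_comp]
    change _ = ((Q * V : M →L[R] M) : M →ₗ[R] M).ker
    rw [← h.eq]
    exact (LinearMap.ker_comp_of_ker_eq_bot _ (LinearMap.ker_eq_bot.mpr V.injective)).symm
  rw [hcomap, Submodule.map_comap_eq_of_surjective V.surjective]

theorem ContinuousLinearMap.IsIdempotentElem.isConj_iff [IsTopologicalAddGroup M]
    {P Q : M →L[R] M} (hP : IsIdempotentElem P) (hQ : IsIdempotentElem Q) :
    IsConj P Q ↔ Nonempty (P.range ≃L[R] Q.range) ∧ Nonempty (P.ker ≃L[R] Q.ker) := by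
  constructor
  · rintro ⟨V, hV⟩
    let e := ContinuousLinearEquiv.unitsEquiv R M V
    exact ⟨⟨(e.submoduleMap _).trans (.ofEq _ _ (e.map_range_eq_of_semiconjBy hV))⟩,
      ⟨(e.submoduleMap _).trans (.ofEq _ _ (e.map_ker_eq_of_semiconjBy hV))⟩⟩
  · rintro ⟨⟨f⟩, ⟨g⟩⟩
    let e : M ≃L[R] M := (Submodule.prodEquivOfIsTopCompl _ _ hP.isTopCompl).symm.trans
      ((f.prodCongr g).trans (Submodule.prodEquivOfIsTopCompl _ _ hQ.isTopCompl))
    refine ⟨e.toUnit, semiconjBy_of_mapsTo_range_ker hP hQ (fun x hx ↦ ?_) (fun x hx ↦ ?_)⟩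
    all_goals simp [e, ContinuousLinearEquiv.toUnit,
      Submodule.projectionOnto_apply_of_mem_left _ hx,
      (Submodule.projectionOnto_apply_eq_zero_iff _).mpr hx]

end Similarity

section Hilbert

variable {E F G : Type*} [NormedAddCommGroup E] [InnerProductSpace ℂ E] [CompleteSpace E]
  [NormedAddCommGroup F] [InnerProductSpace ℂ F] [CompleteSpace F]
  [NormedAddCommGroup G] [InnerProductSpace ℂ G] [CompleteSpace G]

theorem ContinuousLinearMap.norm_apply_eq_of_adjoint_comp_self_eq
    {T : E →L[ℂ] F} {S : E →L[ℂ] G}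
    (h : adjoint T ∘L T = adjoint S ∘L S) (x : E) : ‖T x‖ = ‖S x‖ := by
  rw [apply_norm_eq_sqrt_inner_adjoint_left, h, ← apply_norm_eq_sqrt_inner_adjoint_left]

theorem ContinuousLinearEquiv.isUnit_adjoint_comp_self (T : E ≃L[ℂ] F) :
    IsUnit (adjoint (T : E →L[ℂ] F) ∘L (T : E →L[ℂ] F)) := by
  set t : E →L[ℂ] F := ↑T
  set s : F →L[ℂ] E := ↑T.symm
  have hts : t ∘L s = .id ℂ F := T.coe_comp_coe_symm
  have hst : s ∘L t = .id ℂ E := T.coe_symm_comp_coe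
  refine ⟨⟨_, s ∘L adjoint s, ?_, ?_⟩, rfl⟩
  · change adjoint t ∘L (t ∘L s) ∘L adjoint s = .id ℂ E
    rw [hts, id_comp, ← adjoint_comp, hst, adjoint_id]
  · change s ∘L (adjoint s ∘L adjoint t) ∘L t = .id ℂ E
    rw [← adjoint_comp, hts, adjoint_id, id_comp, hst]

theorem ContinuousLinearEquiv.nonempty_linearIsometryEquiv (T : E ≃L[ℂ] F) :
    Nonempty (E ≃ₗᵢ[ℂ] F) := by
  set A := adjoint (T : E →L[ℂ] F) ∘L (T : E →L[ℂ] F)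
  have hA : 0 ≤ A := (nonneg_iff_isPositive A).mpr (isPositive_adjoint_comp_self _)
  obtain ⟨S, hS⟩ := (CFC.isUnit_sqrt_iff A hA).mpr T.isUnit_adjoint_comp_self
  have hSA : adjoint (S : E →L[ℂ] E) ∘L S = A := by
    rw [hS, ← star_eq_adjoint, (CFC.sqrt_nonneg A).isSelfAdjoint.star_eq]
    exact CFC.sqrt_mul_sqrt_self A
  let U := (ContinuousLinearEquiv.unitsEquiv ℂ E S).symm.trans T
  refine ⟨{ U.toLinearEquiv with norm_map' := fun x ↦ ?_ }⟩
  have hSS : (S : E →L[ℂ] E) ((↑S⁻¹ : E →L[ℂ] E) x) = x :=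
    DFunLike.congr_fun S.mul_inv x
  calc ‖U x‖ = ‖(S : E →L[ℂ] E) ((↑S⁻¹ : E →L[ℂ] E) x)‖ :=
        norm_apply_eq_of_adjoint_comp_self_eq hSA.symm _
    _ = ‖x‖ := by rw [hSS]

theorem nonempty_linearIsometryEquiv_iff_nonempty_continuousLinearEquiv :
    Nonempty (E ≃ₗᵢ[ℂ] F) ↔ Nonempty (E ≃L[ℂ] F) :=
  ⟨fun ⟨e⟩ ↦ ⟨e.toContinuousLinearEquiv⟩,
    fun ⟨T⟩ ↦ T.nonempty_linearIsometryEquiv⟩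

end Hilbert

/-- For bounded idempotents `P, Q` on a complex Hilbert space, there is a bounded invertible
operator `V` (with bounded inverse) such that `V P = Q V` iff the range of `P` is isometrically
isomorphic to the range of `Q` and the kernel of `P` is isometrically isomorphic to the kernel
of `Q`. -/
theorem stmt_9 {H : Type*} [NormedAddCommGroup H] [InnerProductSpace ℂ H] [CompleteSpace H]
    (P Q : H →L[ℂ] H) (hP : P ^ 2 = P) (hQ : Q ^ 2 = Q) :
    (∃ V : (H →L[ℂ] H)ˣ, (V : H →L[ℂ] H) * P = Q * (V : H →L[ℂ] H)) ↔
      (Nonempty ((LinearMap.range (P : H →ₗ[ℂ] H)) ≃ₗᵢ[ℂ] (LinearMap.range (Q : H →ₗ[ℂ] H))) ∧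
        Nonempty ((LinearMap.ker (P : H →ₗ[ℂ] H)) ≃ₗᵢ[ℂ] (LinearMap.ker (Q : H →ₗ[ℂ] H)))) := by
  have hP' : IsIdempotentElem P := (sq P).symm.trans hP
  have hQ' : IsIdempotentElem Q := (sq Q).symm.trans hQ
  have := hP'.isClosed_range.completeSpace_coe
  have := hQ'.isClosed_range.completeSpace_coe
  rw [nonempty_linearIsometryEquiv_iff_nonempty_continuousLinearEquiv,
    nonempty_linearIsometryEquiv_iff_nonempty_continuousLinearEquiv]
  exact hP'.isConj_iff hQ'
end

section
/- Consider the 2×2 complex matrices P = [[0, −1], [0, 1]] and Q = [[1, 2], [0, 0]] (both idempotent). Then: (a) there is no unitary 2×2 matrix V such that V P = Q V; and (b) there is no invertible 2×2 matrix V such that both V P = Q V and V Q = P V. -/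
/-- For the idempotent matrices `P = [[0,-1],[0,1]]` and `Q = [[1,2],[0,0]]`:
(a) no unitary `V` satisfies `V P = Q V`; (b) no invertible `V` satisfies both
`V P = Q V` and `V Q = P V`. -/
theorem stmt_10 :
    (¬ ∃ V : Matrix (Fin 2) (Fin 2) ℂ, V * star V = 1 ∧ star V * V = 1 ∧
        V * !![0, -1; 0, 1] = !![1, 2; 0, 0] * V) ∧
      (¬ ∃ V : Matrix (Fin 2) (Fin 2) ℂ, IsUnit V ∧
        V * !![0, -1; 0, 1] = !![1, 2; 0, 0] * V ∧
        V * !![1, 2; 0, 0] = !![0, -1; 0, 1] * V) := by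
  constructor
  · rintro ⟨V, h1, h2, h3⟩
    set a := V 0 0 with ha
    set b := V 0 1 with hb
    set c := V 1 0 with hc
    set d := V 1 1 with hd
    -- entries of the intertwining relation
    have e00 : (0 : ℂ) = a + 2 * c := by
      have := congrFun (congrFun h3 0) 0
      simpa [Matrix.mul_apply, Fin.sum_univ_two, ← ha, ← hb, ← hc, ← hd] using this
    have e01 : -a + b = b + 2 * d := by
      have := congrFun (congrFun h3 0) 1
      simpa [Matrix.mul_apply, Fin.sum_univ_two, ← ha, ← hb, ← hc, ← hd] using this
    have e11 : -c + d = 0 := by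
      have := congrFun (congrFun h3 1) 1
      simpa [Matrix.mul_apply, Fin.sum_univ_two, ← ha, ← hb, ← hc, ← hd] using this
    -- entries of V * star V = 1
    have u00 : a * star a + b * star b = 1 := by
      have := congrFun (congrFun h1 0) 0
      simpa [Matrix.mul_apply, Fin.sum_univ_two, Matrix.star_apply, Matrix.one_apply,
        ← ha, ← hb, ← hc, ← hd] using this
    have u01 : a * star c + b * star d = 0 := by
      have := congrFun (congrFun h1 0) 1
      simpa [Matrix.mul_apply, Fin.sum_univ_two, Matrix.star_apply, Matrix.one_apply,
        ← ha, ← hb, ← hc, ← hd] using this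
    have u11 : c * star c + d * star d = 1 := by
      have := congrFun (congrFun h1 1) 1
      simpa [Matrix.mul_apply, Fin.sum_univ_two, Matrix.star_apply, Matrix.one_apply,
        ← ha, ← hb, ← hc, ← hd] using this
    have hcd : c = d := by linear_combination -e11
    have had : a = -2 * d := by linear_combination -e01
    -- 2 d (star d) = 1
    have key : 2 * (d * star d) = 1 := by
      rw [hcd] at u11; linear_combination u11
    have hds : star d ≠ 0 := by
      intro h
      rw [h] at key
      simp at key
    have hb2 : b = 2 * d := by
      rw [had, hcd] at u01
      have : star d * (b - 2 * d) = 0 := by linear_combination u01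
      rcases mul_eq_zero.1 this with h | h
      · exact absurd h hds
      · exact sub_eq_zero.mp h
    rw [had, hb2] at u00
    simp only [star_neg, star_mul', star_ofNat] at u00
    have : (8 : ℂ) * (d * star d) = 1 := by linear_combination u00
    have : (4 : ℂ) = 1 := by linear_combination this - 4 * key
    norm_num at this
  · rintro ⟨V, hu, h3, h4⟩
    set a := V 0 0 with ha
    set b := V 0 1 with hb
    set c := V 1 0 with hc
    set d := V 1 1 with hd
    have e01 : -a + b = b + 2 * d := by
      have := congrFun (congrFun h3 0) 1
      simpa [Matrix.mul_apply, Fin.sum_univ_two, ← ha, ← hb, ← hc, ← hd] using this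
    have e11 : -c + d = 0 := by
      have := congrFun (congrFun h3 1) 1
      simpa [Matrix.mul_apply, Fin.sum_univ_two, ← ha, ← hb, ← hc, ← hd] using this
    have f00 : a = -c := by
      have := congrFun (congrFun h4 0) 0
      simpa [Matrix.mul_apply, Fin.sum_univ_two, ← ha, ← hb, ← hc, ← hd] using this
    have hd0 : d = 0 := by linear_combination -e01 - f00 - e11
    have hdet : V.det = 0 := by
      rw [Matrix.det_fin_two, ← ha, ← hb, ← hc, ← hd]
      have hc0 : c = 0 := by linear_combination -e11 + hd0
      have ha0 : a = 0 := by linear_combination f00 - hc0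
      rw [ha0, hc0]; ring
    have := hu.map (Matrix.detMonoidHom)
    simp [hdet] at this
end

section
/- Let H be a complex Hilbert space and let a, b be bounded selfadjoint operators on H such that a is positive (⟨a x, x⟩ ≥ 0 for all x) and injective. If a b + b a = 0, then b = 0. -/
open scoped ComplexOrder

/-!
Anticommutation `a b = -b a` makes `a` commute with `b²`, so `a b²` is a product of commuting
positive elements and hence positive. On the other hand `a b² = -b a b = -b* a b` is negative.
Thus `a b² = 0`; injectivity of `a` gives `b² = b* b = 0`, and the C⋆-identity gives `b = 0`.
-/

theorem Commute.mul_self_of_mul_add_mul_eq_zero {R : Type*} [NonUnitalRing R] {a b : R}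
    (hab : a * b + b * a = 0) : Commute a (b * b) := by
  rw [Commute, SemiconjBy, ← sub_eq_zero]
  calc a * (b * b) - b * b * a = (a * b + b * a) * b - b * (a * b + b * a) := by noncomm_ring
    _ = 0 := by rw [hab, zero_mul, mul_zero, sub_zero]

theorem mul_mul_self_eq_zero_of_mul_add_mul_eq_zero {A : Type*} [CStarAlgebra A] [PartialOrder A]
    [StarOrderedRing A] {a b : A} (ha : 0 ≤ a) (hb : IsSelfAdjoint b)
    (hab : a * b + b * a = 0) : a * (b * b) = 0 := by
  have h_nonneg : 0 ≤ a * (b * b) :=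
    (Commute.mul_self_of_mul_add_mul_eq_zero hab).mul_nonneg ha hb.mul_self_nonneg
  have h_conj : b * a * b = -(a * (b * b)) := by
    rw [← mul_assoc, eq_neg_of_add_eq_zero_right hab, neg_mul]
  have h_nonpos : a * (b * b) ≤ 0 := by
    rw [← neg_nonneg, ← h_conj]
    exact hb.conjugate_nonneg ha
  exact le_antisymm h_nonpos h_nonneg

/-- If `a, b` are bounded selfadjoint operators on a complex Hilbert space, `a` is positive
and injective, and `a b + b a = 0`, then `b = 0`. -/
theorem stmt_11 {H : Type*} [NormedAddCommGroup H] [InnerProductSpace ℂ H] [CompleteSpace H]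
    (a b : H →L[ℂ] H) (ha : IsSelfAdjoint a) (hb : IsSelfAdjoint b)
    (hpos : ∀ x : H, 0 ≤ (inner ℂ (a x) x : ℂ)) (hinj : Function.Injective a)
    (hanti : a * b + b * a = 0) : b = 0 := by
  have ha_nonneg : 0 ≤ a :=
    (ContinuousLinearMap.nonneg_iff_isPositive a).mpr (a.isPositive_iff'.mpr ⟨ha, hpos⟩)
  have hab2 := mul_mul_self_eq_zero_of_mul_add_mul_eq_zero ha_nonneg hb hanti
  have hb2 : star b * b = 0 := by
    ext x
    exact hinj (by simpa [hb.star_eq] using congr($hab2 x))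
  exact (CStarRing.star_mul_self_eq_zero_iff b).mp hb2
end

section
/- Let H be a complex Hilbert space and let P, Q be orthogonal projections on H (P² = P = P*, Q² = Q = Q*). Let C*(P,Q) denote the smallest closed star-subalgebra of the bounded operators on H containing the identity, P, and Q. Then there exists a unitary operator U ∈ C*(P,Q) with U P U* = Q and U Q U* = P if and only if the operator P + Q − I is invertible. -/
/-!
Put `T = P + Q - 1` and `S = P - Q`. Then `T P = Q T`, `T Q = P T` and `S² + T² = 1`, so
`T² = (1 - S)(1 + S)` with `1 - S = (1 - P) + Q` and `1 + S = (1 - Q) + P`.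

If `T` is invertible, its sign `U = T (T²)^(-1/2)` is a self-adjoint unitary in `C*(P, Q)` with
`U P = Q U` and `U Q = P U`.

Conversely, if `(1 - P) + Q` is not invertible, there are unit vectors `xₙ` with `(1 - P) xₙ → 0`
and `Q xₙ → 0`. Every element of `C*(P, Q)` then acts on the `xₙ` asymptotically as a scalar, which
defines a character of `C*(P, Q)` sending `P` to `1` and `Q` to `0`. A unitary `U` with
`U P U* = Q` would have a scalar `c` with `|c|² = 1` and `|c|² = 0`. Swapping `P` and `Q` shows that
`(1 - Q) + P` is invertible too, hence so is `T² = ((1 - P) + Q)((1 - Q) + P)`.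
-/

open Filter Topology
open scoped InnerProductSpace

section Ring

variable {R : Type*} [Ring R] {p q : R}

theorem add_sub_one_mul_eq_mul_add_sub_one (hp : IsIdempotentElem p) (hq : IsIdempotentElem q) :
    (p + q - 1) * p = q * (p + q - 1) := by
  have h : (p + q - 1) * p - q * (p + q - 1) = p * p - p - (q * q - q) := by noncomm_ring
  simpa only [hp.eq, hq.eq, sub_self, sub_zero, sub_eq_zero] using h

theorem add_sub_one_sq (hp : IsIdempotentElem p) (hq : IsIdempotentElem q) :
    (p + q - 1) ^ 2 = (1 - p + q) * (1 - q + p) := by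
  have h : (p + q - 1) ^ 2 - (1 - p + q) * (1 - q + p) = 2 * (p * p - p) + 2 * (q * q - q) := by
    noncomm_ring
  simpa only [hp.eq, hq.eq, sub_self, mul_zero, add_zero, sub_eq_zero] using h

theorem isUnit_add_sub_one_iff (hp : IsIdempotentElem p) (hq : IsIdempotentElem q) :
    IsUnit (p + q - 1) ↔ IsUnit (1 - p + q) ∧ IsUnit (1 - q + p) := by
  rw [← isUnit_pow_iff two_ne_zero, add_sub_one_sq hp hq, Commute.isUnit_mul_iff]
  rw [Commute, SemiconjBy]
  noncomm_ring

end Ring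

section CStarAlgebra

open CFC

theorem IsSelfAdjoint.exists_symmetry_intertwining {A : Type*} [CStarAlgebra A] [PartialOrder A]
    [StarOrderedRing A] {t : A} (ht : IsSelfAdjoint t) (h : IsUnit t) {S : StarSubalgebra ℂ A}
    (hS : IsClosed (S : Set A)) (htS : t ∈ S) :
    ∃ u ∈ S, IsSelfAdjoint u ∧ u * u = 1 ∧
      ∀ b c : A, t * b = c * t → t * c = b * t → u * b = c * u := by
  have ht2 : IsStrictlyPositive (t ^ 2) := (h.pow 2).isStrictlyPositive ht.sq_nonneg
  set w := (t ^ 2) ^ (-(1 / 2) : ℝ)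
  have hcomm (b : A) (hb : Commute (t ^ 2) b) : Commute w b := hb.cfc_nnreal _
  have hwt : Commute w t := hcomm t (Commute.self_pow t 2).symm
  have hwS : w ∈ S := by
    rw [show w = _ from rpow_def, cfc_nnreal_eq_real _ _ ht2.nonneg]
    exact cfc_mem (𝕜 := ℝ) (hs := hS) _ (pow_mem htS 2)
  refine ⟨t * w, mul_mem htS hwS, ?_, ?_, fun b c hbc hcb => ?_⟩
  · exact (ht.commute_iff rpow_nonneg.isSelfAdjoint).1 hwt.symm
  · calc t * w * (t * w) = w * t * (t * w) := by rw [hwt.eq]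
      _ = w * t ^ 2 * w := by noncomm_ring
      _ = 1 := conjugate_rpow_neg_one_half (t ^ 2)
  · have hwb : Commute w b := hcomm b <| by
      rw [sq, Commute, SemiconjBy, mul_assoc, hbc, ← mul_assoc, hcb, mul_assoc]
    rw [mul_assoc, hwb.eq, ← mul_assoc, hbc, mul_assoc]

theorem exists_unitary_conj_swap_of_isUnit {A : Type*} [CStarAlgebra A] [PartialOrder A]
    [StarOrderedRing A] {p q : A} (hp : IsStarProjection p) (hq : IsStarProjection q)
    (h : IsUnit (p + q - 1)) :
    ∃ u ∈ unitary A, u ∈ (StarAlgebra.adjoin ℂ {p, q}).topologicalClosure ∧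
      u * p * star u = q ∧ u * q * star u = p := by
  have ht : IsSelfAdjoint (p + q - 1) := (hp.isSelfAdjoint.add hq.isSelfAdjoint).sub (.one A)
  have htS : p + q - 1 ∈ (StarAlgebra.adjoin ℂ {p, q}).topologicalClosure :=
    StarSubalgebra.le_topologicalClosure _ <| sub_mem (add_mem
      (StarAlgebra.subset_adjoin ℂ _ (by simp)) (StarAlgebra.subset_adjoin ℂ _ (by simp)))
      (one_mem _)
  obtain ⟨u, huS, hus, huu, hu⟩ := ht.exists_symmetry_intertwining h
    (StarSubalgebra.isClosed_topologicalClosure _) htS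
  have hpq := add_sub_one_mul_eq_mul_add_sub_one hp.isIdempotentElem hq.isIdempotentElem
  have hqp : (p + q - 1) * q = p * (p + q - 1) := by
    simpa only [add_comm q p] using
      add_sub_one_mul_eq_mul_add_sub_one hq.isIdempotentElem hp.isIdempotentElem
  refine ⟨u, ?_, huS, ?_, ?_⟩
  · rw [Unitary.mem_iff, hus.star_eq, huu]
    exact ⟨rfl, rfl⟩
  · rw [hu p q hpq hqp, hus.star_eq, mul_assoc, huu, mul_one]
  · rw [hu q p hqp hpq, hus.star_eq, mul_assoc, huu, mul_one]

end CStarAlgebra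

section ApproxEigenvalue

variable {𝕜 E ι : Type*} [NontriviallyNormedField 𝕜] [NormedAddCommGroup E] [NormedSpace 𝕜 E]
  {l : Filter ι} {x : ι → E} {a b : E →L[𝕜] E} {c d : 𝕜}

def HasApproxEigenvalue (l : Filter ι) (x : ι → E) (b : E →L[𝕜] E) (c : 𝕜) : Prop :=
  Tendsto (fun i => b (x i) - c • x i) l (𝓝 0)

namespace HasApproxEigenvalue

theorem algebraMap (c : 𝕜) : HasApproxEigenvalue l x (algebraMap 𝕜 (E →L[𝕜] E) c) c := by
  simp [HasApproxEigenvalue, Algebra.algebraMap_eq_smul_one, tendsto_const_nhds]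

theorem one : HasApproxEigenvalue l x 1 (1 : 𝕜) := by
  simpa using algebraMap (l := l) (x := x) (1 : 𝕜)

theorem add (ha : HasApproxEigenvalue l x a c) (hb : HasApproxEigenvalue l x b d) :
    HasApproxEigenvalue l x (a + b) (c + d) := by
  simpa [HasApproxEigenvalue, add_smul, add_sub_add_comm] using Tendsto.add ha hb

theorem sub (ha : HasApproxEigenvalue l x a c) (hb : HasApproxEigenvalue l x b d) :
    HasApproxEigenvalue l x (a - b) (c - d) := by
  simpa [HasApproxEigenvalue, sub_smul, sub_sub_sub_comm] using Tendsto.sub ha hb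

theorem mul (ha : HasApproxEigenvalue l x a c) (hb : HasApproxEigenvalue l x b d) :
    HasApproxEigenvalue l x (a * b) (c * d) := by
  have key (i : ι) :
      (a * b) (x i) - (c * d) • x i = a (b (x i) - d • x i) + d • (a (x i) - c • x i) := by
    simp only [mul_apply_eq_comp, map_sub, map_smul, smul_sub, smul_smul, mul_comm d c]
    abel
  have h := ((a.continuous.tendsto 0).comp hb).add (Tendsto.const_smul ha d)
  rw [map_zero, smul_zero, add_zero] at h
  exact h.congr fun i => (key i).symm

theorem norm_sub_le [l.NeBot] (hx : ∀ i, ‖x i‖ = 1) (ha : HasApproxEigenvalue l x a c)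
    (hb : HasApproxEigenvalue l x b d) : ‖c - d‖ ≤ ‖a - b‖ := by
  have h := (ha.sub hb).norm
  rw [norm_zero] at h
  refine le_of_tendsto_of_tendsto' (tendsto_const_nhds (x := ‖c - d‖))
    (by simpa using h.const_add ‖a - b‖) fun i => ?_
  calc ‖c - d‖ = ‖(c - d) • x i‖ := by rw [norm_smul, hx, mul_one]
    _ ≤ ‖(a - b) (x i)‖ + ‖(a - b) (x i) - (c - d) • x i‖ := norm_le_insert _ _
    _ ≤ ‖a - b‖ + ‖(a - b) (x i) - (c - d) • x i‖ := by
        gcongr; simpa [hx] using (a - b).le_opNorm (x i)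

theorem unique [l.NeBot] (hx : ∀ i, ‖x i‖ = 1) (hc : HasApproxEigenvalue l x a c)
    (hd : HasApproxEigenvalue l x a d) : c = d := by
  simpa [sub_eq_zero] using hc.norm_sub_le hx hd

theorem cauchySeq [l.NeBot] (hx : ∀ i, ‖x i‖ = 1) {a : ℕ → E →L[𝕜] E} {c : ℕ → 𝕜}
    (ha : CauchySeq a) (h : ∀ n, HasApproxEigenvalue l x (a n) (c n)) : CauchySeq c := by
  rw [Metric.cauchySeq_iff] at ha ⊢
  intro ε hε
  obtain ⟨N, hN⟩ := ha ε hε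
  refine ⟨N, fun m hm n hn => ?_⟩
  rw [dist_eq_norm]
  exact ((h m).norm_sub_le hx (h n)).trans_lt (by simpa only [dist_eq_norm] using hN m hm n hn)

theorem of_tendsto (hx : ∀ i, ‖x i‖ = 1) {a : ℕ → E →L[𝕜] E} {c : ℕ → 𝕜}
    (ha : Tendsto a atTop (𝓝 b)) (hc : Tendsto c atTop (𝓝 d))
    (h : ∀ n, HasApproxEigenvalue l x (a n) (c n)) : HasApproxEigenvalue l x b d := by
  rw [HasApproxEigenvalue, Metric.tendsto_nhds]
  intro ε hε
  have hlim : Tendsto (fun n => ‖b - a n‖ + ‖c n - d‖) atTop (𝓝 0) := by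
    simpa using ((tendsto_const_nhds (x := b)).sub ha).norm.add
      ((hc.sub (tendsto_const_nhds (x := d))).norm)
  obtain ⟨n, hn⟩ := (hlim.eventually (gt_mem_nhds (half_pos hε))).exists
  filter_upwards [Metric.tendsto_nhds.1 (h n) _ (half_pos hε)] with i hi
  rw [dist_zero_right] at hi ⊢
  have key :
      b (x i) - d • x i = (b - a n) (x i) + (c n - d) • x i + (a n (x i) - c n • x i) := by
    simp only [sub_apply, sub_smul]; abel
  calc ‖b (x i) - d • x i‖
      ≤ ‖(b - a n) (x i)‖ + ‖(c n - d) • x i‖ + ‖a n (x i) - c n • x i‖ := by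
        rw [key]; exact norm_add₃_le
    _ ≤ ‖b - a n‖ + ‖c n - d‖ + ‖a n (x i) - c n • x i‖ := by
        gcongr
        · simpa [hx] using (b - a n).le_opNorm (x i)
        · rw [norm_smul, hx, mul_one]
    _ < ε / 2 + ε / 2 := add_lt_add hn hi
    _ = ε := add_halves ε

end HasApproxEigenvalue

end ApproxEigenvalue

section Hilbert

variable {𝕜 H ι : Type*} [RCLike 𝕜] [NormedAddCommGroup H] [InnerProductSpace 𝕜 H]
  [CompleteSpace H]

def approxEigenSubalgebra (l : Filter ι) (x : ι → H) : StarSubalgebra 𝕜 (H →L[𝕜] H) where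
  carrier := {b | ∃ c, HasApproxEigenvalue l x b c ∧ HasApproxEigenvalue l x (star b) (star c)}
  mul_mem' := by
    rintro a b ⟨c, hc, hc'⟩ ⟨d, hd, hd'⟩
    exact ⟨c * d, hc.mul hd, by simpa only [star_mul] using hd'.mul hc'⟩
  add_mem' := by
    rintro a b ⟨c, hc, hc'⟩ ⟨d, hd, hd'⟩
    exact ⟨c + d, hc.add hd, by simpa only [star_add] using hc'.add hd'⟩
  algebraMap_mem' c :=
    ⟨c, .algebraMap c, by simpa only [← algebraMap_star_comm] using .algebraMap (star c)⟩
  star_mem' := by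
    rintro b ⟨c, hc, hc'⟩
    exact ⟨star c, hc', by simpa only [star_star] using hc⟩

theorem isClosed_approxEigenSubalgebra {l : Filter ι} [l.NeBot] {x : ι → H}
    (hx : ∀ i, ‖x i‖ = 1) :
    IsClosed (approxEigenSubalgebra (𝕜 := 𝕜) l x : Set (H →L[𝕜] H)) := by
  refine isClosed_of_closure_subset fun b hb => ?_
  obtain ⟨a, ha, hab⟩ := mem_closure_iff_seq_limit.1 hb
  choose c hc hc' using ha
  obtain ⟨d, hd⟩ :=
    cauchySeq_tendsto_of_complete (HasApproxEigenvalue.cauchySeq hx hab.cauchySeq hc)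
  exact ⟨d, .of_tendsto hx hab hd hc, .of_tendsto hx hab.star hd.star hc'⟩

theorem exists_norm_eq_one_norm_inner_lt_of_not_isUnit {f : H →L[𝕜] H} (hf : ¬IsUnit f)
    {ε : ℝ} (hε : 0 < ε) : ∃ v : H, ‖v‖ = 1 ∧ ‖⟪f v, v⟫_𝕜‖ < ε := by
  contrapose! hf
  refine ContinuousLinearMap.isUnit_of_forall_le_norm_inner_map f (c := ⟨ε, hε.le⟩) hε
    fun v => ?_
  rcases eq_or_ne v 0 with rfl | hv
  · simp
  have hv' : 0 < ‖v‖ := norm_pos_iff.2 hv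
  have h := hf _ (norm_smul_inv_norm (𝕜 := 𝕜) hv)
  simp only [map_smul, inner_smul_left, inner_smul_right, norm_mul, RCLike.norm_conj, norm_inv,
    RCLike.norm_ofReal, abs_norm] at h
  change ‖v‖ ^ 2 * ε ≤ _
  rw [le_inv_mul_iff₀ hv', le_inv_mul_iff₀ hv'] at h
  linarith

theorem IsStarProjection.norm_apply_sq {P : H →L[𝕜] H} (hP : IsStarProjection P) (v : H) :
    ‖P v‖ ^ 2 = RCLike.re ⟪P v, v⟫_𝕜 := by
  rw [ContinuousLinearMap.apply_norm_sq_eq_inner_adjoint_left,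
    ← ContinuousLinearMap.star_eq_adjoint, hP.isSelfAdjoint.star_eq, ← ContinuousLinearMap.mul_def,
    hP.isIdempotentElem.eq]

theorem exists_seq_hasApproxEigenvalue_of_not_isUnit {P Q : H →L[𝕜] H} (hP : IsStarProjection P)
    (hQ : IsStarProjection Q) (h : ¬IsUnit (1 - P + Q)) :
    ∃ x : ℕ → H, (∀ n, ‖x n‖ = 1) ∧ HasApproxEigenvalue atTop x P 1 ∧
      HasApproxEigenvalue atTop x Q 0 := by
  have hε (n : ℕ) : (0 : ℝ) < (1 / (n + 1)) ^ 2 := by positivity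
  choose x hx hxA using fun n => exists_norm_eq_one_norm_inner_lt_of_not_isUnit h (hε n)
  have hsum (n : ℕ) : ‖(1 - P) (x n)‖ ^ 2 + ‖Q (x n)‖ ^ 2 < (1 / (n + 1)) ^ 2 := by
    rw [hP.one_sub.norm_apply_sq, hQ.norm_apply_sq, ← map_add, ← inner_add_left, ← add_apply]
    exact (RCLike.re_le_norm _).trans_lt (hxA n)
  have hsmall {y : ℕ → H} (hy : ∀ n, ‖y n‖ ^ 2 < (1 / (n + 1)) ^ 2) : Tendsto y atTop (𝓝 0) :=
    squeeze_zero_norm (fun n => (lt_of_pow_lt_pow_left₀ 2 (by positivity) (hy n)).le)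
      tendsto_one_div_add_atTop_nhds_zero_nat
  refine ⟨x, hx, ?_, ?_⟩
  · have h1 := hsmall (y := fun n => (1 - P) (x n)) fun n => by
      linarith [hsum n, sq_nonneg ‖Q (x n)‖]
    simpa [HasApproxEigenvalue, sub_apply] using h1.neg
  · have hQx := hsmall (y := fun n => Q (x n)) fun n => by
      linarith [hsum n, sq_nonneg ‖(1 - P) (x n)‖]
    simpa [HasApproxEigenvalue] using hQx

theorem mul_star_ne_of_hasApproxEigenvalue {l : Filter ι} [l.NeBot] {x : ι → H}
    (hx : ∀ i, ‖x i‖ = 1) {P Q U : H →L[𝕜] H} (hPs : IsSelfAdjoint P) (hQs : IsSelfAdjoint Q)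
    (hP : HasApproxEigenvalue l x P 1) (hQ : HasApproxEigenvalue l x Q 0)
    (hU : U ∈ unitary (H →L[𝕜] H))
    (hUPQ : U ∈ (StarAlgebra.adjoin 𝕜 {P, Q}).topologicalClosure) :
    U * P * star U ≠ Q := by
  have hle : (StarAlgebra.adjoin 𝕜 {P, Q}).topologicalClosure ≤ approxEigenSubalgebra l x := by
    refine StarSubalgebra.topologicalClosure_minimal (StarAlgebra.adjoin_le ?_)
      (isClosed_approxEigenSubalgebra hx)
    rintro _ (rfl | rfl)
    · exact ⟨1, hP, by rwa [hPs.star_eq, star_one]⟩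
    · exact ⟨0, hQ, by rwa [hQs.star_eq, star_zero]⟩
  obtain ⟨c, hc, hc'⟩ := hle hUPQ
  intro h
  have hQc : HasApproxEigenvalue l x Q (c * 1 * star c) := h ▸ (hc.mul hP).mul hc'
  have h1c : HasApproxEigenvalue l x 1 (c * star c) :=
    Unitary.mul_star_self_of_mem hU ▸ hc.mul hc'
  have h0 : c * 1 * star c = 0 := hQc.unique hx hQ
  rw [mul_one, h1c.unique hx .one] at h0
  exact one_ne_zero h0

theorem isUnit_one_sub_add_of_unitary_conj {P Q U : H →L[𝕜] H} (hP : IsStarProjection P)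
    (hQ : IsStarProjection Q) (hU : U ∈ unitary (H →L[𝕜] H))
    (hUPQ : U ∈ (StarAlgebra.adjoin 𝕜 {P, Q}).topologicalClosure) (h : U * P * star U = Q) :
    IsUnit (1 - P + Q) := by
  by_contra hPQ
  obtain ⟨x, hx, hxP, hxQ⟩ := exists_seq_hasApproxEigenvalue_of_not_isUnit hP hQ hPQ
  exact mul_star_ne_of_hasApproxEigenvalue hx hP.isSelfAdjoint hQ.isSelfAdjoint hxP hxQ hU hUPQ h

end Hilbert

/-- For orthogonal projections `P, Q` on a complex Hilbert space, there is a unitary `U` in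
the C*-algebra generated by `1, P, Q` with `U P U* = Q` and `U Q U* = P` iff `P + Q - 1` is
invertible. -/
theorem stmt_13 {H : Type*} [NormedAddCommGroup H] [InnerProductSpace ℂ H] [CompleteSpace H]
    (P Q : H →L[ℂ] H) (hP : P ^ 2 = P) (hPs : star P = P) (hQ : Q ^ 2 = Q) (hQs : star Q = Q) :
    (∃ U : H →L[ℂ] H, U ∈ unitary (H →L[ℂ] H) ∧
        U ∈ (StarAlgebra.adjoin ℂ ({P, Q} : Set (H →L[ℂ] H))).topologicalClosure ∧
        U * P * star U = Q ∧ U * Q * star U = P) ↔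
      IsUnit (P + Q - 1) := by
  have hP' : IsStarProjection P := ⟨by rwa [sq] at hP, hPs⟩
  have hQ' : IsStarProjection Q := ⟨by rwa [sq] at hQ, hQs⟩
  refine ⟨fun ⟨U, hU, hUPQ, hPQ, hQP⟩ => ?_, exists_unitary_conj_swap_of_isUnit hP' hQ'⟩
  rw [isUnit_add_sub_one_iff hP'.isIdempotentElem hQ'.isIdempotentElem]
  exact ⟨isUnit_one_sub_add_of_unitary_conj hP' hQ' hU hUPQ hPQ,
    isUnit_one_sub_add_of_unitary_conj hQ' hP' hU (Set.pair_comm P Q ▸ hUPQ) hQP⟩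
end

section
/- Let A be a unital C*-algebra and let P, Q ∈ A be orthogonal projections (P² = P = P*, Q² = Q = Q*). If 1 does not belong to the spectrum of (P − Q)², then there exists a selfadjoint unitary V ∈ A (V = V*, V² = 1) such that V P V* = Q and V Q V* = P. -/
/-!
Put `C = P + Q - 1`. Then `C P = Q C`, `C Q = P C` and `C² = 1 - (P - Q)²`, so the hypothesis
says exactly that the selfadjoint element `C` is invertible. Its polar part `V = C |C|⁻¹` is then
a selfadjoint unitary, and since `|C|⁻¹ = (C²)^(-1/2)` commutes with `P` and `Q` (both commute
with `C²`), `V` inherits the intertwining relations `V P = Q V` and `V Q = P V`.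
-/

open CFC

namespace IsIdempotentElem

variable {R : Type*} [Ring R] {p q : R}

lemma add_sub_one_mul_eq_mul_add_sub_one (hp : IsIdempotentElem p) (hq : IsIdempotentElem q) :
    (p + q - 1) * p = q * (p + q - 1) := by
  simp only [add_mul, mul_add, sub_mul, mul_sub, one_mul, mul_one, hp.eq, hq.eq]
  abel

lemma add_sub_one_mul_self (hp : IsIdempotentElem p) (hq : IsIdempotentElem q) :
    (p + q - 1) * (p + q - 1) = 1 - (p - q) ^ 2 := by
  simp only [sq, add_mul, mul_add, sub_mul, mul_sub, one_mul, mul_one, hp.eq, hq.eq]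
  abel

end IsIdempotentElem

section PolarUnitary

variable {A : Type*} [CStarAlgebra A] [PartialOrder A] [StarOrderedRing A] {c x y : A}

/-- The unitary factor `c |c|⁻¹` of the polar decomposition of an invertible element `c`. -/
noncomputable def polarUnitary (c : A) : A := c * (star c * c) ^ (-(1 / 2) : ℝ)

lemma IsSelfAdjoint.polarUnitary_mul_eq (hc : IsSelfAdjoint c) (hxy : c * x = y * c)
    (hyx : c * y = x * c) : polarUnitary c * x = y * polarUnitary c := by
  have hcx : Commute (star c * c) x := by
    rw [hc.star_eq]
    calc c * c * x = c * y * c := by rw [mul_assoc, hxy, mul_assoc]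
      _ = x * (c * c) := by rw [hyx, mul_assoc]
  have hTx : Commute ((star c * c) ^ (-(1 / 2) : ℝ)) x := hcx.cfc_nnreal _
  rw [polarUnitary, mul_assoc, hTx.eq, ← mul_assoc, hxy, mul_assoc]

lemma IsSelfAdjoint.star_polarUnitary (hc : IsSelfAdjoint c) :
    star (polarUnitary c) = polarUnitary c := by
  have hTc : Commute ((star c * c) ^ (-(1 / 2) : ℝ)) c := by
    refine Commute.cfc_nnreal ?_ _
    rw [hc.star_eq]
    exact (Commute.refl c).mul_left (Commute.refl c)
  rw [polarUnitary, star_mul, rpow_nonneg.isSelfAdjoint.star_eq, ← hTc.eq, hc.star_eq]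

lemma IsSelfAdjoint.polarUnitary_mul_self (hc : IsSelfAdjoint c) (hu : IsUnit c) :
    polarUnitary c * polarUnitary c = 1 := by
  set a := star c * c with ha_def
  have ha : IsStrictlyPositive a :=
    CStarAlgebra.isStrictlyPositive_iff_eq_star_mul_self.mpr ⟨c, hu, rfl⟩
  calc polarUnitary c * polarUnitary c
      = polarUnitary c * c * a ^ (-(1 / 2) : ℝ) := by rw [polarUnitary, ← mul_assoc]
    _ = a ^ (1 : ℝ) * a ^ (-(1 / 2) : ℝ) * a ^ (-(1 / 2) : ℝ) := by
        rw [hc.polarUnitary_mul_eq rfl rfl, polarUnitary, rpow_one a ha.nonneg, ha_def,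
          hc.star_eq, ← mul_assoc]
    _ = 1 := by
        rw [← rpow_add ha.isUnit, ← rpow_add ha.isUnit]
        norm_num [rpow_zero a ha.nonneg]

end PolarUnitary

/-- For orthogonal projections `P, Q` in a unital C*-algebra such that `1` is not in the
spectrum of `(P - Q)²`, there is a selfadjoint unitary `V` with `V P V* = Q`, `V Q V* = P`. -/
theorem stmt_17 {A : Type*} [NormedRing A] [StarRing A] [CStarRing A]
    [NormedAlgebra ℂ A] [StarModule ℂ A] [CompleteSpace A]
    (P Q : A) (hP : P ^ 2 = P) (hPs : star P = P) (hQ : Q ^ 2 = Q) (hQs : star Q = Q)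
    (hspec : (1 : ℂ) ∉ spectrum ℂ ((P - Q) ^ 2)) :
    ∃ V : A, star V = V ∧ V ^ 2 = 1 ∧ V * star V = 1 ∧ star V * V = 1 ∧
      V * P * star V = Q ∧ V * Q * star V = P := by
  let _ : CStarAlgebra A := {}
  let _ := CStarAlgebra.spectralOrder A
  have _ := CStarAlgebra.spectralOrderedRing A
  have hP' : IsIdempotentElem P := (sq P).symm.trans hP
  have hQ' : IsIdempotentElem Q := (sq Q).symm.trans hQ
  set C := P + Q - 1 with hC
  have hCs : IsSelfAdjoint C := by simp [hC, IsSelfAdjoint, hPs, hQs]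
  have hCP : C * P = Q * C := hP'.add_sub_one_mul_eq_mul_add_sub_one hQ'
  have hCQ : C * Q = P * C := by
    simpa only [hC, add_comm P Q] using hQ'.add_sub_one_mul_eq_mul_add_sub_one hP'
  have hCu : IsUnit C := by
    rw [spectrum.notMem_iff, map_one, ← hP'.add_sub_one_mul_self hQ'] at hspec
    exact ((Commute.refl C).isUnit_mul_iff.mp hspec).1
  have hVs : star (polarUnitary C) = polarUnitary C := hCs.star_polarUnitary
  have hV2 := hCs.polarUnitary_mul_self hCu
  refine ⟨polarUnitary C, hVs, (sq _).trans hV2, by rw [hVs, hV2], by rw [hVs, hV2], ?_, ?_⟩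
  · rw [hVs, hCs.polarUnitary_mul_eq hCP hCQ, mul_assoc, hV2, mul_one]
  · rw [hVs, hCs.polarUnitary_mul_eq hCQ hCP, mul_assoc, hV2, mul_one]
end
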